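/- arXiv:1803.04798 — 2 statements merged into one kernel-verified Lean document; each statement's English description precedes it below -/
import Mathlib

section
/- Let H be an m×n matrix with entries in {0,1}. A binary vector f ∈ {0,1}^n is a codeword (∑_{i∈N(c_j)} f_i even for every j) if and only if there exists a binary assignment w with w_{jS} ∈ {0,1} for every j and S ∈ ε_j such that (f, w) is LPM-feasible; in the forward direction one may take, for each j, w_{jS_j} = 1 for S_j = {i ∈ N(c_j) : f_i = 1} and w_{jS} = 0 for all other S ∈ ε_j. (Thus the binary vectors f appearing in feasible solutions of the IPM formulation are exactly the codewords.) -/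
open scoped Classical

/-- The neighborhood `N(c_j)` of check node `j`: the variable indices `i` with `H j i = 1`. -/
noncomputable def Ncheck {m n : ℕ} (H : Fin m → Fin n → ℝ) (j : Fin m) : Finset (Fin n) :=
  Finset.univ.filter fun i => H j i = 1

/-- `ε_j`: the collection of even-cardinality subsets of `N(c_j)` (including `∅`). -/
noncomputable def eps {m n : ℕ} (H : Fin m → Fin n → ℝ) (j : Fin m) :
    Finset (Finset (Fin n)) :=
  (Ncheck H j).powerset.filter fun S => Even S.card

/-- LPM feasibility of a pair `(f, w)`. -/
def LPMFeasible {m n : ℕ} (H : Fin m → Fin n → ℝ)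
    (f : Fin n → ℝ) (w : Fin m → Finset (Fin n) → ℝ) : Prop :=
  (∀ i, 0 ≤ f i) ∧
  (∀ j, ∀ S ∈ eps H j, 0 ≤ w j S) ∧
  (∀ j, ∑ S ∈ eps H j, w j S = 1) ∧
  (∀ j, ∀ i ∈ Ncheck H j, f i = ∑ S ∈ (eps H j).filter (fun S => i ∈ S), w j S)

/-- `f` is a codeword: each check's parity sum is even. -/
def IsCodeword {m n : ℕ} (H : Fin m → Fin n → ℝ) (f : Fin n → ℝ) : Prop :=
  ∀ j : Fin m, ∃ k : ℤ, (∑ i ∈ Ncheck H j, f i) = 2 * (k : ℝ)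

/-! For `f` binary the parity sum of check `j` is the size of the support of `f` in `N(c_j)`,
and for any LPM-feasible `(f, w)` double counting turns it into `∑_{S ∈ ε_j} |S| w_{jS}`. When `w`
is binary this is a sum of even cardinalities, so `f` is a codeword; conversely, for a codeword
the support `S_j` of `f` in `N(c_j)` lies in `ε_j`, and the point mass at `S_j` has marginals `f`. -/

theorem Finset.sum_eq_card_filter_eq_one {ι : Type*} (s : Finset ι) (f : ι → ℝ)
    (hf : ∀ i ∈ s, f i = 0 ∨ f i = 1) :
    ∑ i ∈ s, f i = (s.filter (fun i => f i = 1)).card := by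
  rw [← Finset.sum_boole]
  refine Finset.sum_congr rfl fun i hi => ?_
  rcases hf i hi with h | h <;> simp [h]

theorem Finset.sum_card_mul_eq_sum_card_filter {ι : Type*} (E : Finset (Finset ι))
    (w : Finset ι → ℝ) (hw : ∀ S ∈ E, w S = 0 ∨ w S = 1) :
    ∑ S ∈ E, (S.card : ℝ) * w S = ((∑ S ∈ E.filter (fun S => w S = 1), S.card : ℕ) : ℝ) := by
  rw [Nat.cast_sum, Finset.sum_filter]
  refine Finset.sum_congr rfl fun S hS => ?_
  rcases hw S hS with h | h <;> simp [h]

theorem Finset.sum_sum_filter_mem_eq_sum_card_mul {ι : Type*} [DecidableEq ι] (N : Finset ι)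
    (E : Finset (Finset ι)) (hE : ∀ S ∈ E, S ⊆ N) (w : Finset ι → ℝ) :
    ∑ i ∈ N, ∑ S ∈ E.filter (fun S => i ∈ S), w S = ∑ S ∈ E, (S.card : ℝ) * w S := by
  rw [Finset.sum_comm' (t' := E) (s' := id)]
  · simp only [id, Finset.sum_const, nsmul_eq_mul]
  · intro i S
    simp only [Finset.mem_filter, id]
    exact ⟨fun ⟨_, hS, hi⟩ => ⟨hi, hS⟩, fun ⟨hi, hS⟩ => ⟨hE S hS hi, hS, hi⟩⟩

theorem Nat.even_iff_exists_int_cast_eq_two_mul (n : ℕ) :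
    Even n ↔ ∃ k : ℤ, (n : ℝ) = 2 * k := by
  constructor
  · rintro ⟨k, rfl⟩
    exact ⟨k, by push_cast; ring⟩
  · rintro ⟨k, hk⟩
    have hk' : (n : ℤ) = 2 * k := by exact_mod_cast hk
    exact Int.even_coe_nat n |>.mp ⟨k, by omega⟩

section Checks

variable {m n : ℕ} {H : Fin m → Fin n → ℝ}

theorem mem_eps_iff {j : Fin m} {S : Finset (Fin n)} :
    S ∈ eps H j ↔ S ⊆ Ncheck H j ∧ Even S.card := by
  rw [eps, Finset.mem_filter, Finset.mem_powerset]

theorem isCodeword_iff_even_card_support {f : Fin n → ℝ} (hf : ∀ i, f i = 0 ∨ f i = 1) :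
    IsCodeword H f ↔ ∀ j, Even ((Ncheck H j).filter (fun i => f i = 1)).card := by
  simp only [IsCodeword, Finset.sum_eq_card_filter_eq_one _ f fun i _ => hf i,
    Nat.even_iff_exists_int_cast_eq_two_mul]

theorem LPMFeasible.isCodeword {f : Fin n → ℝ} {w : Fin m → Finset (Fin n) → ℝ}
    (hfw : LPMFeasible H f w) (hw : ∀ j, ∀ S ∈ eps H j, w j S = 0 ∨ w j S = 1) :
    IsCodeword H f := by
  obtain ⟨-, -, -, hmarg⟩ := hfw
  intro j
  have hsum : ∑ i ∈ Ncheck H j, f i = ∑ S ∈ eps H j, (S.card : ℝ) * w j S := by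
    rw [Finset.sum_congr rfl (hmarg j)]
    exact Finset.sum_sum_filter_mem_eq_sum_card_mul _ _ (fun S hS => (mem_eps_iff.mp hS).1) _
  rw [hsum, Finset.sum_card_mul_eq_sum_card_filter _ _ (hw j),
    ← Nat.even_iff_exists_int_cast_eq_two_mul]
  exact Finset.even_sum _ fun S hS => (mem_eps_iff.mp (Finset.mem_filter.mp hS).1).2

theorem lpmFeasible_point_mass_support {f : Fin n → ℝ} (hf : ∀ i, f i = 0 ∨ f i = 1)
    (hmem : ∀ j, (Ncheck H j).filter (fun i => f i = 1) ∈ eps H j) :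
    LPMFeasible H f
      (fun j S => if S = (Ncheck H j).filter (fun i => f i = 1) then 1 else 0) := by
  refine ⟨fun i => ?_, fun j S _ => ?_, fun j => ?_, fun j i hi => ?_⟩
  · rcases hf i with h | h <;> simp [h]
  · dsimp only
    split_ifs <;> norm_num
  · rw [Finset.sum_ite_eq', if_pos (hmem j)]
  · rw [Finset.sum_ite_eq']
    rcases hf i with h | h <;> simp [hmem j, hi, h]

end Checks

theorem codeword_iff_binary_LPM_feasible_general
    (m n : ℕ) (H : Fin m → Fin n → ℝ)
    (f : Fin n → ℝ) (hfbin : ∀ i, f i = 0 ∨ f i = 1) :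
    (IsCodeword H f ↔
      ∃ w : Fin m → Finset (Fin n) → ℝ,
        (∀ j, ∀ S ∈ eps H j, w j S = 0 ∨ w j S = 1) ∧ LPMFeasible H f w) ∧
    (IsCodeword H f →
      LPMFeasible H f
        (fun j S => if S = (Ncheck H j).filter (fun i => f i = 1) then 1 else 0)) := by
  have hfeas : IsCodeword H f → LPMFeasible H f
      (fun j S => if S = (Ncheck H j).filter (fun i => f i = 1) then 1 else 0) := fun hcw =>
    lpmFeasible_point_mass_support hfbin fun j =>
      mem_eps_iff.mpr ⟨Finset.filter_subset _ _, (isCodeword_iff_even_card_support hfbin).mp hcw j⟩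
  refine ⟨⟨fun hcw => ⟨_, fun j S _ => ?_, hfeas hcw⟩, fun ⟨w, hw, hfw⟩ => hfw.isCodeword hw⟩,
    hfeas⟩
  split_ifs <;> simp

/-- A binary vector `f` is a codeword iff there is a binary assignment `w`
with `(f, w)` LPM-feasible; in the forward direction one may take, for each `j`,
`w j S = 1` exactly for `S = {i ∈ N(c_j) : f i = 1}` and `0` otherwise. -/
theorem codeword_iff_binary_LPM_feasible
    (m n : ℕ) (H : Fin m → Fin n → ℝ)
    (hH : ∀ j i, H j i = 0 ∨ H j i = 1)
    (f : Fin n → ℝ) (hfbin : ∀ i, f i = 0 ∨ f i = 1) :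
    (IsCodeword H f ↔
      ∃ w : Fin m → Finset (Fin n) → ℝ,
        (∀ j, ∀ S ∈ eps H j, w j S = 0 ∨ w j S = 1) ∧ LPMFeasible H f w) ∧
    (IsCodeword H f →
      LPMFeasible H f
        (fun j S => if S = (Ncheck H j).filter (fun i => f i = 1) then 1 else 0)) :=
  codeword_iff_binary_LPM_feasible_general m n H f hfbin
end

section
/- Let H be an m×n matrix with entries in {0,1}, let f ∈ [0,1]^n, fix a check index j and an odd integer s with 1 ≤ s ≤ |N(c_j)|. Then the minimum over all subsets S ⊆ N(c_j) with |S| = s of the left-hand side ∑_{i∈N(c_j)∖S} f_i + ∑_{i∈S} (1 − f_i) is attained by taking S to consist of s indices i ∈ N(c_j) with the largest values f_i. (Hence examining, for each j and each odd s, the set of s largest f-values among N(c_j), as in Algorithm 6, finds a violated cut of this family whenever one exists.) -/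
open scoped Classical

/-!
For `S ⊆ N(c_j)` the cut left-hand side equals `∑_{N(c_j)} f + |S| - 2 ∑_{i ∈ S} f i`, so
minimizing it over sets of fixed size `s` means maximizing `∑_{i ∈ S} f i`. A set `T` whose
values dominate those of its complement does so by an exchange argument: matching `S \ T`
bijectively with `T \ S` only increases the sum.
-/

open Finset

namespace Finset

variable {ι M : Type*} [AddCommMonoid M] [Preorder M] [IsOrderedAddMonoid M]

theorem sum_le_sum_of_card_eq_of_forall_le {s t : Finset ι} (f : ι → M) (hcard : #s = #t)
    (h : ∀ i ∈ s, ∀ i' ∈ t, f i ≤ f i') : ∑ i ∈ s, f i ≤ ∑ i ∈ t, f i := by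
  let e : s ≃ t := equivOfCardEq hcard
  calc ∑ i ∈ s, f i = ∑ x : s, f x := (sum_coe_sort s f).symm
    _ ≤ ∑ x : s, f (e x) := sum_le_sum fun x _ => h x x.2 (e x) (e x).2
    _ = ∑ y : t, f y := e.sum_comp (fun y => f y)
    _ = ∑ i ∈ t, f i := sum_coe_sort t f

theorem sum_le_sum_of_card_eq_of_forall_notMem_le [DecidableEq ι] {s t : Finset ι} (f : ι → M)
    (hcard : #s = #t) (h : ∀ i ∈ t, ∀ i' ∈ s, i' ∉ t → f i' ≤ f i) :
    ∑ i ∈ s, f i ≤ ∑ i ∈ t, f i := by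
  have hsdiff : ∑ i ∈ s \ t, f i ≤ ∑ i ∈ t \ s, f i :=
    sum_le_sum_of_card_eq_of_forall_le f (card_sdiff_comm hcard)
      fun i hi i' hi' => h i' (mem_sdiff.1 hi').1 i (mem_sdiff.1 hi).1 (mem_sdiff.1 hi).2
  rw [← sum_inter_add_sum_sdiff s t, ← sum_inter_add_sum_sdiff t s, inter_comm]
  exact add_le_add_right hsdiff _

theorem sum_sdiff_add_sum_one_sub [DecidableEq ι] {R : Type*} [CommRing R] {s t : Finset ι}
    (f : ι → R) (hts : t ⊆ s) :
    ∑ i ∈ s \ t, f i + ∑ i ∈ t, (1 - f i) = ∑ i ∈ s, f i + #t - 2 * ∑ i ∈ t, f i := by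
  rw [sum_sdiff_eq_sub hts, sum_sub_distrib, sum_const, nsmul_one]
  ring

end Finset

theorem cut_lhs_minimized_by_largest_values_general
    (m n : ℕ) (H : Fin m → Fin n → ℝ)
    (f : Fin n → ℝ)
    (j : Fin m) (s : ℕ) :
    ∀ T ⊆ Ncheck H j, T.card = s →
      (∀ i ∈ T, ∀ i' ∈ Ncheck H j \ T, f i' ≤ f i) →
      ∀ S ⊆ Ncheck H j, S.card = s →
        (∑ i ∈ Ncheck H j \ T, f i) + (∑ i ∈ T, (1 - f i)) ≤
          (∑ i ∈ Ncheck H j \ S, f i) + ∑ i ∈ S, (1 - f i) := by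
  intro T hT hTcard hTmax S hS hScard
  have hsum : ∑ i ∈ S, f i ≤ ∑ i ∈ T, f i :=
    sum_le_sum_of_card_eq_of_forall_notMem_le f (hScard.trans hTcard.symm)
      fun i hi i' hi' hi'T => hTmax i hi i' (mem_sdiff.2 ⟨hS hi', hi'T⟩)
  have hlhs (U : Finset (Fin n)) (hU : U ⊆ Ncheck H j) :
      ∑ i ∈ Ncheck H j \ U, f i + ∑ i ∈ U, (1 - f i) =
        ∑ i ∈ Ncheck H j, f i + #U - 2 * ∑ i ∈ U, f i := by
    -- `convert` bridges the classical `DecidableEq` instance of the statement and `Fin`'s own.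
    convert sum_sdiff_add_sum_one_sub f hU
  rw [hlhs T hT, hlhs S hS, hTcard, hScard]
  linarith

/-- For `f ∈ [0,1]^n`, a check `j` and an odd `s ≤ |N(c_j)|`, the minimum of
the cut left-hand side `∑_{i ∈ N(c_j) \ S} f i + ∑_{i ∈ S} (1 - f i)` over subsets
`S ⊆ N(c_j)` with `|S| = s` is attained by any set `T` consisting of `s` indices with
the largest `f`-values among `N(c_j)`. -/
theorem cut_lhs_minimized_by_largest_values
    (m n : ℕ) (H : Fin m → Fin n → ℝ)
    (hH : ∀ j i, H j i = 0 ∨ H j i = 1)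
    (f : Fin n → ℝ) (hf : ∀ i, 0 ≤ f i ∧ f i ≤ 1)
    (j : Fin m) (s : ℕ) (hs_odd : Odd s) (hs_pos : 1 ≤ s) (hs_le : s ≤ (Ncheck H j).card) :
    ∀ T ⊆ Ncheck H j, T.card = s →
      (∀ i ∈ T, ∀ i' ∈ Ncheck H j \ T, f i' ≤ f i) →
      ∀ S ⊆ Ncheck H j, S.card = s →
        (∑ i ∈ Ncheck H j \ T, f i) + (∑ i ∈ T, (1 - f i)) ≤
          (∑ i ∈ Ncheck H j \ S, f i) + ∑ i ∈ S, (1 - f i) :=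
  cut_lhs_minimized_by_largest_values_general m n H f j s
end
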